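/- The λ-jump count is subadditive under splitting of the sequence: if a_l = b_l + c_l for all l, then N_λ(a) ≤ N_{λ/2}(b) + N_{λ/2}(c), where N_μ(·) denotes the μ-jump count of a sequence. -/
import Mathlib


open scoped ENNReal BigOperators

/-- The `μ`-jump count of a sequence `a : ℕ → ℂ`. -/
noncomputable def jumpCount (a : ℕ → ℂ) (μ : ℝ) : ℝ≥0∞ :=
  ⨆ (M : ℕ) (_ : ∃ u v : Fin M → ℕ,
      (∀ i, u i < v i) ∧ (∀ i j : Fin M, i < j → v i ≤ u j) ∧
      (∀ i, μ < ‖a (u i) - a (v i)‖)), (M : ℝ≥0∞)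

lemma le_jumpCount (a : ℕ → ℂ) (μ : ℝ) (M : ℕ)
    (h : ∃ u v : Fin M → ℕ, (∀ i, u i < v i) ∧ (∀ i j : Fin M, i < j → v i ≤ u j) ∧
      (∀ i, μ < ‖a (u i) - a (v i)‖)) : (M : ℝ≥0∞) ≤ jumpCount a μ :=
  le_iSup₂ (f := fun M (_ : ∃ u v : Fin M → ℕ,
      (∀ i, u i < v i) ∧ (∀ i j : Fin M, i < j → v i ≤ u j) ∧
      (∀ i, μ < ‖a (u i) - a (v i)‖)) => (M : ℝ≥0∞)) M h

lemma sub_jumpCount (f : ℕ → ℂ) (μ : ℝ) (M : ℕ) (u v : Fin M → ℕ)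
    (h1 : ∀ i, u i < v i) (h2 : ∀ i j : Fin M, i < j → v i ≤ u j)
    (s : Finset (Fin M)) (h3 : ∀ i ∈ s, μ < ‖f (u i) - f (v i)‖) :
    (s.card : ℝ≥0∞) ≤ jumpCount f μ := by
  apply le_jumpCount
  refine ⟨u ∘ s.orderEmbOfFin rfl, v ∘ s.orderEmbOfFin rfl, fun i => h1 _,
    fun i j hij => h2 _ _ ?_, fun i => h3 _ (Finset.orderEmbOfFin_mem s rfl i)⟩
  exact (s.orderEmbOfFin rfl).strictMono hij

/-- if `a = b + c` pointwise then `N_λ(a) ≤ N_{λ/2}(b) + N_{λ/2}(c)`. -/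
theorem stmt2 (a b c : ℕ → ℂ) (lam : ℝ) (hlam : 0 < lam)
    (habc : ∀ l, a l = b l + c l) :
    jumpCount a lam ≤ jumpCount b (lam / 2) + jumpCount c (lam / 2) := by
  refine iSup₂_le fun M h => ?_
  obtain ⟨u, v, h1, h2, h3⟩ := h
  set s : Finset (Fin M) :=
    Finset.univ.filter (fun i => lam / 2 < ‖b (u i) - b (v i)‖) with hs
  have hsb : (s.card : ℝ≥0∞) ≤ jumpCount b (lam / 2) :=
    sub_jumpCount b _ M u v h1 h2 s (fun i hi => (Finset.mem_filter.mp hi).2)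
  have hsc : (sᶜ.card : ℝ≥0∞) ≤ jumpCount c (lam / 2) := by
    refine sub_jumpCount c _ M u v h1 h2 sᶜ (fun i hi => ?_)
    have hb : ‖b (u i) - b (v i)‖ ≤ lam / 2 := by
      by_contra hcon
      exact (Finset.mem_compl.mp hi) (Finset.mem_filter.mpr ⟨Finset.mem_univ i,
        lt_of_not_ge hcon⟩)
    have ha := h3 i
    have key : a (u i) - a (v i) = (b (u i) - b (v i)) + (c (u i) - c (v i)) := by
      rw [habc, habc]; ring
    have htri : ‖a (u i) - a (v i)‖ ≤ ‖b (u i) - b (v i)‖ + ‖c (u i) - c (v i)‖ := by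
      rw [key]; exact norm_add_le _ _
    linarith
  have hM : (M : ℝ≥0∞) = (s.card : ℝ≥0∞) + (sᶜ.card : ℝ≥0∞) := by
    rw [← Nat.cast_add, Finset.card_add_card_compl]
    simp
  rw [hM]
  exact add_le_add hsb hsc
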